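/- Linear check soundness of hypergraph product expander codes: Consider a classical code with n_cla bits and m_cla = ζ·n_cla checks given by parity-check matrix H ∈ F₂^{C×B}. Suppose the minimum Hamming weight d_cla of a nonzero u with H·u = 0 and the minimum Hamming weight d_cla^T of a nonzero w with Hᵀ·w = 0 both satisfy d_cla, d_cla^T ≥ ξ·n_cla, and suppose both the classical code and its transpose code have (χ·n_cla, η)-linear-check-expansion. Set n := n_cla² + m_cla² and χ' := min(√2·χ, ξ)/√(1+ζ²). Then the hypergraph product of the classical code with itself has (χ'·√n, f)-check-soundness with f(M) = 6M/η: every stabilizer of the hypergraph product code of weight M < χ'·√n is the F₂-sum of at most 6M/η distinct checks. -/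

import Mathlib

/-- Qubits of the hypergraph product of a classical code (with `nc` bits, `mc` checks)
with itself: pairs of bits and pairs of checks. -/
abbrev HGPQubit (nc mc : ℕ) := (Fin nc × Fin nc) ⊕ (Fin mc × Fin mc)

/-- Support of an `F₂`-vector indexed by the HGP qubits. -/
def hgpSupp {nc mc : ℕ} (v : HGPQubit nc mc → ZMod 2) : Finset (HGPQubit nc mc) :=
  Finset.univ.filter fun q => v q ≠ 0

/-- The Z-check of the HGP code indexed by a bit `b` and a check `c̃`. -/
def hgpZcheck {nc mc : ℕ} (H : Matrix (Fin mc) (Fin nc) (ZMod 2))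
    (b : Fin nc) (ct : Fin mc) : HGPQubit nc mc → ZMod 2 :=
  fun q => match q with
  | Sum.inl (b', bt) => if b' = b then H ct bt else 0
  | Sum.inr (c, ct') => if ct' = ct then H c b else 0

/-- The X-check of the HGP code indexed by a check `c` and a bit `b̃`. -/
def hgpXcheck {nc mc : ℕ} (H : Matrix (Fin mc) (Fin nc) (ZMod 2))
    (c : Fin mc) (bt : Fin nc) : HGPQubit nc mc → ZMod 2 :=
  fun q => match q with
  | Sum.inl (b, bt') => if bt' = bt then H c b else 0
  | Sum.inr (c', ct) => if c' = c then H ct bt else 0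

/-- Hamming weight of an `F₂`-vector on `Fin k`. -/
def hamWt {k : ℕ} (v : Fin k → ZMod 2) : ℕ :=
  (Finset.univ.filter fun i => v i ≠ 0).card

/-!
Write a stabilizer through its coefficient matrix `F` of checks: its blocks are the syndromes
`F * H` and `H * F` (`Hᵀ` in place of `H` for X-checks), and only they matter. As the weight `M`
is below `2 χ n_cla`, one of them, say `H * F`, has fewer than `χ n_cla` nonzero columns `R`.
The part `Y` of `F` on the other columns satisfies `H * Y = 0`, and the distance bound forces
every row of `Y * H` into the `H`-image of the vectors supported on `R`: otherwise a linear
functional vanishing on that image turns these rows into a nonzero codeword of `ker H` supported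
on the nonzero rows of `F * H`. Choosing the preimages linearly replaces `Y` by a matrix
supported on `R` with the same syndromes. Every row of the new `F` then involves fewer than
`χ n_cla` checks, so check expansion bounds the number of checks by `|F * H| / η ≤ M / η`; the
X- and Z-parts together need at most `2 M / η` checks.
-/

open Finset Matrix

def matrixWeight {K m n : Type*} [Zero K] [DecidableEq K] [Fintype m] [Fintype n]
    (M : Matrix m n K) : ℕ :=
  hammingNorm (Function.uncurry M)

def HasDistanceAtLeast {K m n : Type*} [Semiring K] [DecidableEq K] [Fintype n]
    (H : Matrix m n K) (d : ℝ) : Prop :=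
  ∀ u : n → K, u ≠ 0 → H *ᵥ u = 0 → d ≤ hammingNorm u

def HasLinearCheckExpansion {K m n : Type*} [Semiring K] [DecidableEq K] [Fintype m] [Fintype n]
    (H : Matrix m n K) (D η : ℝ) : Prop :=
  ∀ v : m → K, (hammingNorm v : ℝ) < D → η * hammingNorm v ≤ hammingNorm (v ᵥ* H)

section MatrixWeight

variable {K m n : Type*} [Zero K] [DecidableEq K] [Fintype m] [Fintype n]

theorem matrixWeight_eq_sum_hammingNorm (M : Matrix m n K) :
    matrixWeight M = ∑ i, hammingNorm (M i) := by
  simp only [matrixWeight, hammingNorm, card_filter, Fintype.sum_prod_type]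
  rfl

theorem matrixWeight_transpose (M : Matrix m n K) : matrixWeight Mᵀ = matrixWeight M := by
  simp only [matrixWeight_eq_sum_hammingNorm, hammingNorm, card_filter]
  rw [Finset.sum_comm]
  rfl

theorem hammingNorm_le_matrixWeight (M : Matrix m n K) : hammingNorm M ≤ matrixWeight M := by
  rw [matrixWeight_eq_sum_hammingNorm]
  unfold hammingNorm
  rw [card_filter]
  refine sum_le_sum fun i _ => ?_
  split_ifs with h
  exacts [hammingNorm_pos_iff.mpr h, Nat.zero_le _]

end MatrixWeight

theorem LinearMap.exists_section_map {K V V' : Type*} [Field K] [AddCommGroup V] [Module K V]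
    [AddCommGroup V'] [Module K V'] (f : V →ₗ[K] V') (W : Submodule K V) :
    ∃ τ : V' →ₗ[K] V, (∀ u, τ u ∈ W) ∧ ∀ u ∈ W.map f, f (τ u) = u := by
  obtain ⟨σ, hσ⟩ := (f ∘ₗ W.subtype).rangeRestrict.exists_rightInverse_of_surjective
    (LinearMap.range_rangeRestrict _)
  obtain ⟨τ, hτ⟩ := LinearMap.exists_extend σ
  refine ⟨W.subtype ∘ₗ τ, fun u => (τ u).2, fun u hu => ?_⟩
  obtain ⟨w, hw, rfl⟩ := hu
  have hw' : f w ∈ LinearMap.range (f ∘ₗ W.subtype) := ⟨⟨w, hw⟩, rfl⟩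
  have hτw : τ (f w) = σ ⟨f w, hw'⟩ := LinearMap.congr_fun hτ ⟨f w, hw'⟩
  simpa [hτw] using congrArg Subtype.val (LinearMap.congr_fun hσ ⟨f w, hw'⟩)

section Cleaning

variable {K : Type*} [Field K] {m n : Type*} [Fintype n]

theorem exists_rows_mem_mul_eq_of_rows_mem_map [Fintype m] {H : Matrix m n K}
    (W : Submodule K (m → K)) {Y : Matrix n m K} (hHY : H * Y = 0)
    (hYH : ∀ b, (Y * H : Matrix n n K) b ∈ W.map H.vecMulLinear) :
    ∃ Δ : Matrix n m K, (∀ b, Δ b ∈ W) ∧ Δ * H = Y * H ∧ H * Δ = 0 := by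
  obtain ⟨τ, hτW, hτ⟩ := H.vecMulLinear.exists_section_map W
  refine ⟨of fun b => τ ((Y * H : Matrix n n K) b), fun b => hτW _,
    funext fun b => hτ _ (hYH b), ?_⟩
  have hrow : ∀ a, (H * of fun b => τ ((Y * H : Matrix n n K) b)) a
      = τ ((H * (Y * H) : Matrix m n K) a) := fun a => by
    rw [mul_apply_eq_vecMul, mul_apply_eq_vecMul, vecMul_eq_sum, vecMul_eq_sum, map_sum]
    simp only [map_smul]
    rfl
  funext a
  rw [hrow, ← Matrix.mul_assoc, hHY, Matrix.zero_mul]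
  exact map_zero τ

variable [DecidableEq K]

theorem eq_zero_of_forall_sum_smul_eq_zero {d : ℝ} {H : Matrix m n K}
    (hd : HasDistanceAtLeast H d) {V : Type*} [AddCommGroup V] [Module K V] {v : n → V}
    (hv : ∀ c, ∑ b, H c b • v b = 0) (S : Finset n) (hS : (#S : ℝ) < d)
    (hvS : ∀ b ∉ S, v b = 0) : v = 0 := by
  funext b
  refine (Module.forall_dual_apply_eq_zero_iff K (v b)).mp fun φ => ?_
  suffices φ ∘ v = 0 from congrFun this b
  by_contra hne
  have hker : H *ᵥ (φ ∘ v) = 0 := by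
    ext c
    simpa [mulVec, dotProduct, mul_comm] using congrArg φ (hv c)
  have hsupp : hammingNorm (φ ∘ v) ≤ #S :=
    card_le_card fun b hb => by_contra fun hbS => (mem_filter.mp hb).2 (by simp [hvS b hbS])
  exact absurd (hd _ hne hker) (not_le.mpr ((Nat.cast_le.mpr hsupp).trans_lt hS))

/-- The images of the rows of `A` in the quotient by `U` form a vector-valued codeword of `H`. -/
theorem row_mem_of_mul_eq_zero {d : ℝ} {H : Matrix m n K} (hd : HasDistanceAtLeast H d)
    {o : Type*} (U : Submodule K (o → K)) {A : Matrix n o K} (hA : H * A = 0)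
    (S : Finset n) (hS : (#S : ℝ) < d) (hAS : ∀ b ∉ S, A b ∈ U) (b : n) : A b ∈ U := by
  have hq := eq_zero_of_forall_sum_smul_eq_zero hd (v := fun b => U.mkQ (A b))
    (fun c => by
      simp_rw [← map_smul, ← map_sum, ← vecMul_eq_sum, ← mul_apply_eq_vecMul, hA]
      rfl) S hS
    (fun b hb => (Submodule.Quotient.mk_eq_zero U).mpr (hAS b hb))
  exact (Submodule.Quotient.mk_eq_zero U).mp (congrFun hq b)

variable [Fintype m]

theorem exists_mul_eq_mul_eq_and_col_eq_zero {d : ℝ} {H : Matrix m n K}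
    (hd : HasDistanceAtLeast H d) (F : Matrix n m K) (hF : (matrixWeight (F * H) : ℝ) < d) :
    ∃ F' : Matrix n m K,
      F' * H = F * H ∧ H * F' = H * F ∧ ∀ c, (H * F)ᵀ c = 0 → F'ᵀ c = 0 := by
  set S : Matrix m m K := (H * F)ᵀ
  let W : Submodule K (m → K) := Submodule.pi {c : m | S c = 0} fun _ => (⊥ : Submodule K K)
  have memW : ∀ v, v ∈ W ↔ ∀ c : m, S c = 0 → v c = 0 := fun _ => Iff.rfl
  let Y : Matrix n m K := of fun b c => if S c = 0 then F b c else 0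
  have hHY : H * Y = 0 := by
    ext a c
    simp only [Y, mul_apply, of_apply, Matrix.zero_apply]
    split_ifs with h
    · exact congrFun h a
    · simp
  have hFY : ∀ b, (F - Y) b ∈ W := fun b => (memW _).mpr fun c hc => by simp [Y, hc]
  have hYH : ∀ b, (Y * H : Matrix n n K) b ∈ W.map H.vecMulLinear := by
    refine row_mem_of_mul_eq_zero hd _ (by rw [← Matrix.mul_assoc, hHY, Matrix.zero_mul])
      {b | (F * H : Matrix n n K) b ≠ 0} ?_ fun b hb => ?_
    · have h := hammingNorm_le_matrixWeight (F * H)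
      unfold hammingNorm at h
      exact lt_of_le_of_lt (Nat.cast_le.mpr h) hF
    · have hFHb : (F * H : Matrix n n K) b = 0 := by simpa using hb
      have h : ((F - Y) * H : Matrix n n K) b = -(Y * H : Matrix n n K) b := by
        funext j
        have hj := congrFun hFHb j
        simp only [Matrix.sub_mul, Matrix.sub_apply, Pi.neg_apply, Pi.zero_apply] at hj ⊢
        simp [hj]
      rw [← neg_neg ((Y * H : Matrix n n K) b), ← h]
      exact neg_mem (Submodule.mem_map_of_mem (hFY b))
  obtain ⟨Δ, hΔW, hΔH, hHΔ⟩ := exists_rows_mem_mul_eq_of_rows_mem_map W hHY hYH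
  refine ⟨F - Y + Δ, ?_, ?_, fun c hc => funext fun b => ?_⟩
  · rw [Matrix.add_mul, hΔH, Matrix.sub_mul, sub_add_cancel]
  · rw [Matrix.mul_add, hHΔ, Matrix.mul_sub, hHY, sub_zero, add_zero]
  · simp only [transpose_apply, Matrix.add_apply]
    rw [(memW _).mp (hFY b) c hc, (memW _).mp (hΔW b) c hc, add_zero]
    rfl

theorem mul_matrixWeight_le_of_col_zero {D η : ℝ} {H : Matrix m n K}
    (hexp : HasLinearCheckExpansion H D η)
    {o : Type*} [Fintype o] (G : Matrix m o K) (hG : (hammingNorm G : ℝ) < D)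
    {F : Matrix n m K} (hFG : ∀ c, G c = 0 → Fᵀ c = 0) :
    η * matrixWeight F ≤ matrixWeight (F * H) := by
  rw [matrixWeight_eq_sum_hammingNorm, matrixWeight_eq_sum_hammingNorm]
  push_cast
  rw [mul_sum]
  refine sum_le_sum fun b _ => hexp (F b) (lt_of_le_of_lt (Nat.cast_le.mpr ?_) hG)
  unfold hammingNorm
  refine card_le_card fun c => ?_
  simp only [mem_filter, mem_univ, true_and]
  exact fun hFc hGc => hFc (congrFun (hFG c hGc) b)

theorem exists_mul_eq_mul_eq_and_matrixWeight_le_left {d D η : ℝ} {H : Matrix m n K}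
    (hd : HasDistanceAtLeast H d) (hexp : HasLinearCheckExpansion H D η)
    (F : Matrix n m K) (hFH : (matrixWeight (F * H) : ℝ) < d)
    (hHF : (matrixWeight (H * F) : ℝ) < D) :
    ∃ F' : Matrix n m K, F' * H = F * H ∧ H * F' = H * F ∧
      η * matrixWeight F' ≤ matrixWeight (F * H) := by
  obtain ⟨F', hF'H, hHF', hcol⟩ := exists_mul_eq_mul_eq_and_col_eq_zero hd F hFH
  have hG : (hammingNorm (H * F)ᵀ : ℝ) < D := by
    refine lt_of_le_of_lt (Nat.cast_le.mpr ?_) hHF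
    exact (hammingNorm_le_matrixWeight _).trans (matrixWeight_transpose _).le
  exact ⟨F', hF'H, hHF', hF'H ▸ mul_matrixWeight_le_of_col_zero hexp _ hG hcol⟩

theorem exists_mul_eq_mul_eq_and_matrixWeight_le {d D η : ℝ} {H : Matrix m n K}
    (hd : HasDistanceAtLeast H d) (hdT : HasDistanceAtLeast Hᵀ d)
    (hexp : HasLinearCheckExpansion H D η) (hexpT : HasLinearCheckExpansion Hᵀ D η)
    (F : Matrix n m K) (hFd : (matrixWeight (F * H) + matrixWeight (H * F) : ℝ) < d)
    (hFD : (matrixWeight (F * H) + matrixWeight (H * F) : ℝ) < 2 * D) :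
    ∃ F' : Matrix n m K, F' * H = F * H ∧ H * F' = H * F ∧
      η * matrixWeight F' ≤ matrixWeight (F * H) + matrixWeight (H * F) := by
  have h₀ := Nat.cast_nonneg (α := ℝ) (matrixWeight (F * H))
  have h₀' := Nat.cast_nonneg (α := ℝ) (matrixWeight (H * F))
  by_cases hsmall : (matrixWeight (H * F) : ℝ) < D
  · obtain ⟨F', h₁, h₂, h₃⟩ :=
      exists_mul_eq_mul_eq_and_matrixWeight_le_left hd hexp F (by linarith) hsmall
    exact ⟨F', h₁, h₂, by linarith⟩
  · have e₁ : matrixWeight (Fᵀ * Hᵀ) = matrixWeight (H * F) := by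
      rw [← transpose_mul, matrixWeight_transpose]
    have e₂ : matrixWeight (Hᵀ * Fᵀ) = matrixWeight (F * H) := by
      rw [← transpose_mul, matrixWeight_transpose]
    obtain ⟨F', h₁, h₂, h₃⟩ := exists_mul_eq_mul_eq_and_matrixWeight_le_left hdT hexpT
      Fᵀ (by rw [e₁]; linarith) (by rw [e₂]; linarith)
    refine ⟨F'ᵀ, by simpa [transpose_mul] using congrArg transpose h₂,
      by simpa [transpose_mul] using congrArg transpose h₁, ?_⟩
    rw [matrixWeight_transpose]
    rw [e₁] at h₃
    linarith

end Cleaning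

theorem sum_filter_ne_zero_eq_sum_smul {ι V : Type*} [Fintype ι] [AddCommMonoid V]
    [Module (ZMod 2) V] (c : ι → ZMod 2) (f : ι → V) :
    ∑ i ∈ univ.filter (c · ≠ 0), f i = ∑ i, c i • f i := by
  rw [sum_filter]
  refine sum_congr rfl fun i _ => ?_
  rcases (by decide : ∀ a : ZMod 2, a = 0 ∨ a = 1) (c i) with h | h <;> simp [h]

theorem vecMul_eq_sum_filter_ne_zero {m n : Type*} [Fintype m] (v : m → ZMod 2)
    (H : Matrix m n (ZMod 2)) : v ᵥ* H = ∑ c ∈ univ.filter (v · ≠ 0), H c := by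
  rw [vecMul_eq_sum]
  exact (sum_filter_ne_zero_eq_sum_smul v fun c => H c).symm

theorem hasLinearCheckExpansion_of_forall_finset {m n : Type*} [Fintype m] [Fintype n]
    {H : Matrix m n (ZMod 2)} {D η : ℝ}
    (h : ∀ T : Finset m, (#T : ℝ) < D → η * #T ≤ hammingNorm (∑ c ∈ T, H c)) :
    HasLinearCheckExpansion H D η := fun v hv => by
  rw [vecMul_eq_sum_filter_ne_zero]
  exact h _ hv

section HGP

variable {nc mc : ℕ}

def hgpBlockVec (A : Matrix (Fin nc) (Fin nc) (ZMod 2)) (B : Matrix (Fin mc) (Fin mc) (ZMod 2)) :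
    HGPQubit nc mc → ZMod 2
  | Sum.inl (b, b') => A b b'
  | Sum.inr (c, c') => B c c'

theorem card_hgpSupp_hgpBlockVec (A : Matrix (Fin nc) (Fin nc) (ZMod 2))
    (B : Matrix (Fin mc) (Fin mc) (ZMod 2)) :
    #(hgpSupp (hgpBlockVec A B)) = matrixWeight A + matrixWeight B := by
  simp only [hgpSupp, matrixWeight, hammingNorm, card_filter, Fintype.sum_sum_type]
  rfl

theorem sum_smul_hgpZcheck (H : Matrix (Fin mc) (Fin nc) (ZMod 2))
    (F : Matrix (Fin nc) (Fin mc) (ZMod 2)) :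
    ∑ p : Fin nc × Fin mc, F p.1 p.2 • hgpZcheck H p.1 p.2 = hgpBlockVec (F * H) (H * F) := by
  funext q
  rcases q with ⟨b, b'⟩ | ⟨c, c'⟩ <;>
    simp [hgpZcheck, hgpBlockVec, Fintype.sum_prod_type, mul_apply, mul_comm]

theorem sum_smul_hgpXcheck (H : Matrix (Fin mc) (Fin nc) (ZMod 2))
    (G : Matrix (Fin mc) (Fin nc) (ZMod 2)) :
    ∑ p : Fin mc × Fin nc, G p.1 p.2 • hgpXcheck H p.1 p.2 =
      hgpBlockVec (Hᵀ * G) (G * Hᵀ) := by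
  funext q
  rcases q with ⟨b, b'⟩ | ⟨c, c'⟩ <;>
    simp [hgpXcheck, hgpBlockVec, Fintype.sum_prod_type, mul_apply, mul_comm]

variable (H : Matrix (Fin mc) (Fin nc) (ZMod 2)) {d D η : ℝ}

theorem exists_finset_eq_sum_hgpZcheck
    (hd : HasDistanceAtLeast H d) (hdT : HasDistanceAtLeast Hᵀ d)
    (hexp : HasLinearCheckExpansion H D η) (hexpT : HasLinearCheckExpansion Hᵀ D η)
    {z : HGPQubit nc mc → ZMod 2}
    (hz : z ∈ Submodule.span (ZMod 2) (Set.range fun p : Fin nc × Fin mc => hgpZcheck H p.1 p.2))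
    (hzd : (#(hgpSupp z) : ℝ) < d) (hzD : (#(hgpSupp z) : ℝ) < 2 * D) :
    ∃ T : Finset (Fin nc × Fin mc),
      z = ∑ p ∈ T, hgpZcheck H p.1 p.2 ∧ η * #T ≤ #(hgpSupp z) := by
  obtain ⟨c, hc⟩ := (Submodule.mem_span_range_iff_exists_fun _).mp hz
  have hzF : z = hgpBlockVec (of (Function.curry c) * H) (H * of (Function.curry c)) := by
    rw [← hc]
    exact sum_smul_hgpZcheck H (of (Function.curry c))
  rw [hzF, card_hgpSupp_hgpBlockVec] at hzd hzD ⊢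
  push_cast at hzd hzD ⊢
  obtain ⟨F', h₁, h₂, h₃⟩ :=
    exists_mul_eq_mul_eq_and_matrixWeight_le hd hdT hexp hexpT _ hzd hzD
  refine ⟨univ.filter fun p : Fin nc × Fin mc => F' p.1 p.2 ≠ 0, ?_, h₃⟩
  rw [sum_filter_ne_zero_eq_sum_smul (fun p : Fin nc × Fin mc => F' p.1 p.2), sum_smul_hgpZcheck,
    h₁, h₂]

theorem exists_finset_eq_sum_hgpXcheck
    (hd : HasDistanceAtLeast H d) (hdT : HasDistanceAtLeast Hᵀ d)
    (hexp : HasLinearCheckExpansion H D η) (hexpT : HasLinearCheckExpansion Hᵀ D η)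
    {x : HGPQubit nc mc → ZMod 2}
    (hx : x ∈ Submodule.span (ZMod 2) (Set.range fun p : Fin mc × Fin nc => hgpXcheck H p.1 p.2))
    (hxd : (#(hgpSupp x) : ℝ) < d) (hxD : (#(hgpSupp x) : ℝ) < 2 * D) :
    ∃ T : Finset (Fin mc × Fin nc),
      x = ∑ p ∈ T, hgpXcheck H p.1 p.2 ∧ η * #T ≤ #(hgpSupp x) := by
  obtain ⟨c, hc⟩ := (Submodule.mem_span_range_iff_exists_fun _).mp hx
  have hxG : x = hgpBlockVec (Hᵀ * of (Function.curry c)) (of (Function.curry c) * Hᵀ) := by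
    rw [← hc]
    exact sum_smul_hgpXcheck H (of (Function.curry c))
  rw [hxG, card_hgpSupp_hgpBlockVec, add_comm] at hxd hxD ⊢
  push_cast at hxd hxD ⊢
  -- the X-checks of `H` behave like the Z-checks of the transpose code, blocks swapped
  rw [← transpose_transpose H] at hd hexp
  obtain ⟨G', h₁, h₂, h₃⟩ :=
    exists_mul_eq_mul_eq_and_matrixWeight_le hdT hd hexpT hexp _ hxd hxD
  refine ⟨univ.filter fun p : Fin mc × Fin nc => G' p.1 p.2 ≠ 0, ?_, h₃⟩
  rw [sum_filter_ne_zero_eq_sum_smul (fun p : Fin mc × Fin nc => G' p.1 p.2), sum_smul_hgpXcheck,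
    h₁, h₂]

end HGP

theorem lt_of_lt_hgp_threshold {nc mc : ℕ} {ζ ξ χ M : ℝ} (hζ : (mc : ℝ) = ζ * nc)
    (hM₀ : 0 ≤ M)
    (hM : M < min (√2 * χ) ξ / √(1 + ζ ^ 2) * √((nc ^ 2 + mc ^ 2 : ℕ) : ℝ)) :
    M < ξ * nc ∧ M < 2 * (χ * nc) := by
  have hnc : (0 : ℝ) ≤ nc := Nat.cast_nonneg nc
  have hsqrt : √((nc ^ 2 + mc ^ 2 : ℕ) : ℝ) = nc * √(1 + ζ ^ 2) := by
    rw [show ((nc ^ 2 + mc ^ 2 : ℕ) : ℝ) = nc ^ 2 * (1 + ζ ^ 2) by push_cast; rw [hζ]; ring,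
      Real.sqrt_mul (sq_nonneg _), Real.sqrt_sq hnc]
  have hM' : M < min (√2 * χ) ξ * nc := by
    convert hM using 1
    rw [hsqrt]
    field_simp
  have hξ : M < ξ * nc := hM'.trans_le (mul_le_mul_of_nonneg_right (min_le_right _ _) hnc)
  have hχ : M < √2 * (χ * nc) := by
    rw [← mul_assoc]
    exact hM'.trans_le (mul_le_mul_of_nonneg_right (min_le_left _ _) hnc)
  have hχnc : 0 < χ * nc := pos_of_mul_pos_right (hM₀.trans_lt hχ) (Real.sqrt_nonneg 2)
  have hsqrt2 : √2 < 2 := by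
    rw [Real.sqrt_lt' two_pos]
    norm_num
  exact ⟨hξ, hχ.trans (mul_lt_mul_of_pos_right hsqrt2 hχnc)⟩

/-- Linear check soundness of hypergraph product expander codes.  If the
classical code has `m_cla = ζ·n_cla` checks, minimum distances
`d_cla, d_cla^T ≥ ξ·n_cla` (for the code and its transpose), and both codes have
`(χ·n_cla, η)`-linear-check-expansion, then with `n = n_cla² + m_cla²` and
`χ' = min(√2·χ, ξ)/√(1+ζ²)`, every stabilizer of the HGP of the code with itself of
weight `M < χ'·√n` is the `F₂`-sum of at most `6M/η` distinct checks. -/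
theorem hgp_expander_linear_check_soundness
    (nc mc : ℕ) (H : Matrix (Fin mc) (Fin nc) (ZMod 2))
    (ζ ξ χ η : ℝ) (hζ : (mc : ℝ) = ζ * nc) (hη : 0 < η)
    (hdist : ∀ u : Fin nc → ZMod 2, u ≠ 0 → H.mulVec u = 0 → ξ * nc ≤ (hamWt u : ℝ))
    (hdistT : ∀ w : Fin mc → ZMod 2, w ≠ 0 → H.transpose.mulVec w = 0 → ξ * nc ≤ (hamWt w : ℝ))
    (hexp : ∀ T : Finset (Fin mc), (T.card : ℝ) < χ * nc →
      η * T.card ≤ (hamWt (∑ c ∈ T, fun b => H c b) : ℝ))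
    (hexpT : ∀ T : Finset (Fin nc), (T.card : ℝ) < χ * nc →
      η * T.card ≤ (hamWt (∑ b ∈ T, fun c => H c b) : ℝ)) :
    ∀ (x z : HGPQubit nc mc → ZMod 2),
      x ∈ Submodule.span (ZMod 2) (Set.range fun p : Fin mc × Fin nc => hgpXcheck H p.1 p.2) →
      z ∈ Submodule.span (ZMod 2) (Set.range fun p : Fin nc × Fin mc => hgpZcheck H p.1 p.2) →
      (((hgpSupp x ∪ hgpSupp z).card : ℝ)
        < (min (Real.sqrt 2 * χ) ξ / Real.sqrt (1 + ζ ^ 2)) * Real.sqrt ((nc ^ 2 + mc ^ 2 : ℕ) : ℝ)) →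
      ∃ (TX : Finset (Fin mc × Fin nc)) (TZ : Finset (Fin nc × Fin mc)),
        x = (∑ p ∈ TX, hgpXcheck H p.1 p.2) ∧ z = (∑ p ∈ TZ, hgpZcheck H p.1 p.2) ∧
        ((TX.card : ℝ) + (TZ.card : ℝ)) ≤ 6 * ((hgpSupp x ∪ hgpSupp z).card : ℝ) / η := by
  intro x z hx hz hM
  set M : ℝ := ((hgpSupp x ∪ hgpSupp z).card : ℝ)
  have hM₀ : 0 ≤ M := Nat.cast_nonneg _
  obtain ⟨hMd, hMD⟩ := lt_of_lt_hgp_threshold hζ hM₀ hM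
  have hxM : (#(hgpSupp x) : ℝ) ≤ M := Nat.cast_le.mpr (card_le_card subset_union_left)
  have hzM : (#(hgpSupp z) : ℝ) ≤ M := Nat.cast_le.mpr (card_le_card subset_union_right)
  have hexp' := hasLinearCheckExpansion_of_forall_finset hexp
  have hexpT' := hasLinearCheckExpansion_of_forall_finset (H := Hᵀ) hexpT
  obtain ⟨TX, hxTX, hTX⟩ := exists_finset_eq_sum_hgpXcheck H hdist hdistT hexp' hexpT' hx
    (by linarith) (by linarith)
  obtain ⟨TZ, hzTZ, hTZ⟩ := exists_finset_eq_sum_hgpZcheck H hdist hdistT hexp' hexpT' hz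
    (by linarith) (by linarith)
  refine ⟨TX, TZ, hxTX, hzTZ, ?_⟩
  rw [le_div_iff₀ hη]
  linarith
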